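/- arXiv:1006.0508 — 2 statements merged into one kernel-verified Lean document; each statement's English description precedes it below -/
import Mathlib

section
/- There is an injective group homomorphism φ from PSL₂(ℤ) into Thompson's group T with φ(A) = a and φ(B) = b; in particular, the subgroup of T generated by a and b is isomorphic to PSL₂(ℤ). -/
open scoped MatrixGroups

noncomputable section

/-- The circle `ℝ/ℤ`. -/
abbrev UnitCircle := AddCircle (1 : ℝ)

/-- A real number is dyadic if it is of the form `z / 2^n` with `z ∈ ℤ`. -/
def IsDyadic (x : ℝ) : Prop := ∃ (z : ℤ) (n : ℕ), x = (z : ℝ) / 2 ^ n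

/-- `F : ℝ → ℝ` is a lift of an element of Thompson's group `T`. -/
def IsThompsonLift (F : ℝ → ℝ) : Prop :=
  StrictMono F ∧ (∀ x : ℝ, F (x + 1) = F x + 1) ∧
  ∃ B : Finset ℝ, (↑B ⊆ Set.Ico (0 : ℝ) 1) ∧ (∀ x ∈ B, IsDyadic x ∧ IsDyadic (F x)) ∧
    ∀ x ∈ Set.Ico (0 : ℝ) 1, x ∉ B → ∃ (m : ℤ) (ε : ℝ), 0 < ε ∧
      ∀ y : ℝ, |y - x| < ε → F y = F x + (2 : ℝ) ^ m * (y - x)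

/-- A bijection of the circle `ℝ/ℤ` is an element of Thompson's group `T` if it is
induced by a piecewise linear dyadic orientation-preserving lift. -/
def IsThompsonElt (f : Equiv.Perm UnitCircle) : Prop :=
  ∃ F : ℝ → ℝ, IsThompsonLift F ∧
    ∀ x : ℝ, f ((x : UnitCircle)) = ((F x : ℝ) : UnitCircle)

/-- Thompson's group `T`, as a subgroup of the group of bijections of the circle. -/
def ThompsonT : Subgroup (Equiv.Perm UnitCircle) := Subgroup.closure {f | IsThompsonElt f}

/-- The piecewise linear map of `[0,1]` inducing the element `b` of `T`. -/
def bMap (x : ℝ) : ℝ :=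
  if x ≤ 1 / 2 then x / 2 + 3 / 4 else if x ≤ 3 / 4 then 2 * x - 1 else x - 1 / 4

/-- `a` is the rotation `x ↦ x + 1/2` of the circle. -/
def IsRotHalf (a : Equiv.Perm UnitCircle) : Prop :=
  ∀ x : ℝ, a ((x : UnitCircle)) = ((x + 1 / 2 : ℝ) : UnitCircle)

/-- `b` is the element of `T` induced by the piecewise linear map `bMap` of `[0,1]`. -/
def IsBElt (b : Equiv.Perm UnitCircle) : Prop :=
  ∀ x : ℝ, x ∈ Set.Icc (0 : ℝ) 1 → b ((x : UnitCircle)) = ((bMap x : ℝ) : UnitCircle)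

/-- The class `A` of the matrix `[[0,−1],[1,0]]` in `PSL₂(ℤ)`. -/
def Aelt : PSL(2, ℤ) :=
  QuotientGroup.mk (⟨!![0, -1; 1, 0], by norm_num [Matrix.det_fin_two_of]⟩ :
    Matrix.SpecialLinearGroup (Fin 2) ℤ)

/-- The class `B` of the matrix `[[0,−1],[1,1]]` in `PSL₂(ℤ)`. -/
def Belt : PSL(2, ℤ) :=
  QuotientGroup.mk (⟨!![0, -1; 1, 1], by norm_num [Matrix.det_fin_two_of]⟩ :
    Matrix.SpecialLinearGroup (Fin 2) ℤ)

/-!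
`PSL₂(ℤ)` is the free product `C₂ ∗ C₃` of the cyclic groups generated by `A` and `B`.
The map `C₂ ∗ C₃ → PSL₂(ℤ)` is onto because `S` and `T = S⁻¹ B` generate `SL₂(ℤ)`, and it is
injective by ping-pong on the upper half plane: `A = (z ↦ -1/z)` sends `re z < 0` into `re z > 0`,
while `B = (z ↦ -1/(z+1))` and `B² = B⁻¹ = (z ↦ -1/z - 1)` send `re z > 0` into `re z < 0`.
Since `a² = b³ = 1`, the same free product maps onto `⟨a, b⟩ ≤ T`, injectively by ping-pong on
the circle with the arcs `(0, 1/2)` and `(1/2, 1)`: `a` swaps them, and `b`, `b²` map `(0, 1/2)`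
onto `(3/4, 1)` and `(1/2, 3/4)`.
-/

open Monoid Pointwise ModularGroup UpperHalfPlane Set

section ZModPowHom

variable {G : Type*} [Group G] (n : ℕ) [NeZero n] (g : G) (hg : g ^ n = 1)

def zmodPowHom : Multiplicative (ZMod n) →* G where
  toFun x := g ^ x.toAdd.val
  map_one' := by simp
  map_mul' x y := by
    rw [toAdd_mul, ZMod.val_add, ← pow_eq_pow_mod _ hg, pow_add]

lemma zmodPowHom_ofAdd_one : zmodPowHom n g hg (.ofAdd 1) = g := by
  simp [zmodPowHom, ZMod.val_one_eq_one_mod, ← pow_eq_pow_mod _ hg]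

lemma exists_zmodPowHom_eq_pow_of_ne_one {x : Multiplicative (ZMod n)} (hx : x ≠ 1) :
    ∃ k, 0 < k ∧ k < n ∧ zmodPowHom n g hg x = g ^ k :=
  ⟨_, Nat.pos_of_ne_zero fun h => hx (by simpa [ZMod.val_eq_zero] using h), ZMod.val_lt _, rfl⟩

lemma range_zmodPowHom_le {H : Subgroup G} (hgH : g ∈ H) : (zmodPowHom n g hg).range ≤ H := by
  rintro _ ⟨x, rfl⟩
  exact H.pow_mem hgH _

end ZModPowHom

/-- The factors of the free product `C₂ ∗ C₃`: `C₂` at `true`, `C₃` at `false`. -/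
abbrev C2C3Factor (i : Bool) : Type := Multiplicative (ZMod (cond i 2 3))

abbrev C2C3 : Type := CoprodI C2C3Factor

namespace C2C3

variable {G : Type*} [Group G] {g h : G} (hg : g ^ 2 = 1) (hh : h ^ 3 = 1)

def gen₂ : C2C3 := CoprodI.of (i := true) (.ofAdd 1)

def gen₃ : C2C3 := CoprodI.of (i := false) (.ofAdd 1)

def lift : C2C3 →* G :=
  CoprodI.lift fun
    | true => zmodPowHom 2 g hg
    | false => zmodPowHom 3 h hh

lemma lift_gen₂ : lift hg hh gen₂ = g :=
  (CoprodI.lift_of _ _).trans (zmodPowHom_ofAdd_one 2 g hg)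

lemma lift_gen₃ : lift hg hh gen₃ = h :=
  (CoprodI.lift_of _ _).trans (zmodPowHom_ofAdd_one 3 h hh)

lemma range_lift : (lift hg hh).range = Subgroup.closure {g, h} := by
  refine le_antisymm (CoprodI.lift_range_le _ _ fun i => ?_) ?_
  · cases i
    · exact range_zmodPowHom_le 3 h hh (Subgroup.subset_closure (by simp))
    · exact range_zmodPowHom_le 2 g hg (Subgroup.subset_closure (by simp))
  · rw [Subgroup.closure_le]
    rintro _ (rfl | rfl)
    · exact ⟨gen₂, lift_gen₂ hg hh⟩
    · exact ⟨gen₃, lift_gen₃ hg hh⟩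

theorem lift_injective_of_ping_pong {α : Type*} [MulAction G α] {X Y : Set α}
    (hX : X.Nonempty) (hY : Y.Nonempty) (hXY : Disjoint X Y)
    (hgY : g • Y ⊆ X) (hhX : h • X ⊆ Y) (hh2X : h ^ 2 • X ⊆ Y) :
    Function.Injective (lift hg hh) := by
  classical
  refine CoprodI.lift_injective_of_ping_pong _ (Or.inr ⟨false, by simp⟩) (fun i => cond i X Y)
    (fun i => by cases i <;> assumption) ?_ ?_
  · rintro (_ | _) (_ | _) hij
    exacts [(hij rfl).elim, hXY.symm, hXY, (hij rfl).elim]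
  · rintro (_ | _) (_ | _) hij x hx
    · exact (hij rfl).elim
    · obtain ⟨k, hk0, hk3, hx⟩ := exists_zmodPowHom_eq_pow_of_ne_one 3 h hh hx
      rw [hx]
      interval_cases k
      exacts [by simpa using hhX, hh2X]
    · obtain ⟨k, hk0, hk2, hx⟩ := exists_zmodPowHom_eq_pow_of_ne_one 2 g hg hx
      rw [hx]
      interval_cases k
      simpa using hgY
    · exact (hij rfl).elim

end C2C3

lemma Aelt_eq_mk_S : Aelt = QuotientGroup.mk S := rfl

lemma Belt_eq_mk_S_mul_T : Belt = QuotientGroup.mk (S * T) := by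
  unfold Belt
  congr 1
  ext i j
  fin_cases i <;> fin_cases j <;> simp [Matrix.mul_apply, Fin.sum_univ_succ, coe_S, coe_T]

lemma mk_neg_one_eq_one : (QuotientGroup.mk (-1 : SL(2, ℤ)) : PSL(2, ℤ)) = 1 :=
  (QuotientGroup.eq_one_iff _).2 <| Subgroup.mem_center_iff.2 fun g => by simp

lemma Aelt_sq : Aelt ^ 2 = 1 := by
  rw [Aelt_eq_mk_S, ← QuotientGroup.mk_pow, ← mk_neg_one_eq_one]
  congr 1
  ext i j
  fin_cases i <;> fin_cases j <;> simp [sq, Matrix.mul_apply, Fin.sum_univ_succ, coe_S]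

lemma Belt_cube : Belt ^ 3 = 1 := by
  rw [Belt_eq_mk_S_mul_T, ← QuotientGroup.mk_pow, ← mk_neg_one_eq_one]
  congr 1
  ext i j
  fin_cases i <;> fin_cases j <;>
    simp [pow_succ, Matrix.mul_apply, Fin.sum_univ_succ, coe_S, coe_T]

lemma closure_Aelt_Belt : Subgroup.closure {Aelt, Belt} = ⊤ := by
  have hT : (QuotientGroup.mk T : PSL(2, ℤ)) = Aelt⁻¹ * Belt := by
    rw [Aelt_eq_mk_S, Belt_eq_mk_S_mul_T, ← QuotientGroup.mk_inv, ← QuotientGroup.mk_mul,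
      inv_mul_cancel_left]
  rw [eq_top_iff, ← (QuotientGroup.mk' (Subgroup.center SL(2, ℤ))).range_eq_top.2
      (QuotientGroup.mk'_surjective _),
    MonoidHom.range_eq_map, ← SpecialLinearGroup.SL2Z_generators, MonoidHom.map_closure,
    Subgroup.closure_le]
  rintro _ ⟨_, (rfl | rfl), rfl⟩
  · exact Subgroup.subset_closure (by simp [Aelt_eq_mk_S])
  · rw [QuotientGroup.mk'_apply, hT]
    exact mul_mem (inv_mem (Subgroup.subset_closure (by simp)))
      (Subgroup.subset_closure (by simp))

lemma smul_eq_self_of_mem_center {g : SL(2, ℤ)} (hg : g ∈ Subgroup.center SL(2, ℤ)) (z : ℍ) :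
    g • z = z := by
  obtain ⟨r, hr, hrg⟩ := Matrix.SpecialLinearGroup.mem_center_iff.1 hg
  have hg' : g = 1 ∨ g = -1 := by
    rcases (by simpa using hr : r = 1 ∨ r = -1) with rfl | rfl
    exacts [.inl (Subtype.ext (by simp [← hrg])), .inr (Subtype.ext (by simp [← hrg]))]
  rcases hg' with rfl | rfl
  · exact one_smul _ z
  · rw [SL_neg_smul, one_smul]

instance : MulAction PSL(2, ℤ) ℍ :=
  MulAction.compHom ℍ <| QuotientGroup.lift _ (MulAction.toPermHom SL(2, ℤ) ℍ)
    fun _ hg => Equiv.ext (smul_eq_self_of_mem_center hg)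

lemma quotient_mk_smul (g : SL(2, ℤ)) (z : ℍ) : (QuotientGroup.mk g : PSL(2, ℤ)) • z = g • z := rfl

lemma re_S_smul (z : ℍ) : (S • z).re = -z.re / Complex.normSq z := by
  rw [modular_S_smul]
  simp [Complex.inv_re, neg_div]

lemma re_S_smul_neg_of_re_pos {z : ℍ} (hz : 0 < z.re) : (S • z).re < 0 := by
  rw [re_S_smul]
  exact div_neg_of_neg_of_pos (neg_neg_of_pos hz) z.normSq_pos

lemma re_Aelt_smul_pos {z : ℍ} (hz : z.re < 0) : 0 < (Aelt • z).re := by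
  rw [Aelt_eq_mk_S, quotient_mk_smul, re_S_smul]
  exact div_pos (neg_pos.2 hz) z.normSq_pos

lemma re_Belt_smul_neg {z : ℍ} (hz : 0 < z.re) : (Belt • z).re < 0 := by
  rw [Belt_eq_mk_S_mul_T, quotient_mk_smul, mul_smul]
  exact re_S_smul_neg_of_re_pos (by rw [re_T_smul]; linarith)

lemma Belt_sq_eq : Belt ^ 2 = QuotientGroup.mk (T ^ (-1 : ℤ)) * Aelt := by
  have hB : Belt ^ 2 = Belt⁻¹ := eq_inv_of_mul_eq_one_left (by rw [← pow_succ, Belt_cube])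
  have hA : Aelt⁻¹ = Aelt := inv_eq_of_mul_eq_one_right (by rw [← sq, Aelt_sq])
  rw [hB, Belt_eq_mk_S_mul_T, QuotientGroup.mk_mul, ← Aelt_eq_mk_S, mul_inv_rev, hA,
    zpow_neg_one, QuotientGroup.mk_inv]

lemma re_Belt_sq_smul_neg {z : ℍ} (hz : 0 < z.re) : (Belt ^ 2 • z).re < 0 := by
  rw [Belt_sq_eq, mul_smul, quotient_mk_smul, re_T_zpow_smul, Aelt_eq_mk_S, quotient_mk_smul]
  have := re_S_smul_neg_of_re_pos hz
  push_cast
  linarith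

lemma injective_lift_Aelt_Belt : Function.Injective (C2C3.lift Aelt_sq Belt_cube) := by
  refine C2C3.lift_injective_of_ping_pong Aelt_sq Belt_cube (X := {z : ℍ | 0 < z.re})
    (Y := {z | z.re < 0})
    ⟨.mk (1 + Complex.I) (by simp), by simp⟩ ⟨.mk (-1 + Complex.I) (by simp), by simp⟩
    (Set.disjoint_left.2 fun _ hX hY => lt_asymm (α := ℝ) hY hX) ?_ ?_ ?_
  · exact Set.smul_set_subset_iff.2 fun z hz => re_Aelt_smul_pos hz
  · exact Set.smul_set_subset_iff.2 fun z hz => re_Belt_smul_neg hz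
  · exact Set.smul_set_subset_iff.2 fun z hz => re_Belt_sq_smul_neg hz

def c2c3EquivPSL : C2C3 ≃* PSL(2, ℤ) :=
  MulEquiv.ofBijective (C2C3.lift Aelt_sq Belt_cube) ⟨injective_lift_Aelt_Belt,
    MonoidHom.range_eq_top.1 ((C2C3.range_lift _ _).trans closure_Aelt_Belt)⟩

lemma c2c3EquivPSL_symm_Aelt : c2c3EquivPSL.symm Aelt = C2C3.gen₂ :=
  c2c3EquivPSL.symm_apply_eq.2 (C2C3.lift_gen₂ Aelt_sq Belt_cube).symm

lemma c2c3EquivPSL_symm_Belt : c2c3EquivPSL.symm Belt = C2C3.gen₃ :=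
  c2c3EquivPSL.symm_apply_eq.2 (C2C3.lift_gen₃ Aelt_sq Belt_cube).symm

lemma coe_add_intCast (x : ℝ) (n : ℤ) : ((x + n : ℝ) : UnitCircle) = x := by
  rw [AddCircle.coe_add, (AddCircle.coe_eq_zero_iff 1 (x := (n : ℝ))).2 ⟨n, by simp⟩, add_zero]

lemma coe_fract (x : ℝ) : ((Int.fract x : ℝ) : UnitCircle) = x := by
  rw [← coe_add_intCast _ ⌊x⌋, Int.fract_add_floor]

lemma IsRotHalf.sq_eq_one {a : Equiv.Perm UnitCircle} (ha : IsRotHalf a) : a ^ 2 = 1 := by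
  refine Equiv.ext fun z => ?_
  obtain ⟨x, -, rfl⟩ := AddCircle.eq_coe_Ico z
  rw [sq, Equiv.Perm.mul_apply, ha, ha, Equiv.Perm.one_apply, add_assoc, add_halves,
    AddCircle.coe_add_period]

lemma bMap_mem_Icc {x : ℝ} (hx : x ∈ Icc 0 1) : bMap x ∈ Icc 0 1 := by
  obtain ⟨h0, h1⟩ := hx
  unfold bMap
  split_ifs <;> constructor <;> linarith

lemma bMap_bMap_bMap_eq_or_eq_add_one {x : ℝ} (hx : x ∈ Ico 0 1) :
    bMap (bMap (bMap x)) = x ∨ bMap (bMap (bMap x)) = x + 1 := by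
  obtain ⟨h0, h1⟩ := hx
  simp only [bMap]
  split_ifs <;> first | (left; linarith) | (right; linarith)

lemma IsBElt.cube_eq_one {b : Equiv.Perm UnitCircle} (hb : IsBElt b) : b ^ 3 = 1 := by
  refine Equiv.ext fun z => ?_
  obtain ⟨x, hx, rfl⟩ := AddCircle.eq_coe_Ico z
  have hxI : x ∈ Icc 0 1 := Ico_subset_Icc_self (by simpa using hx)
  rw [pow_succ, sq, Equiv.Perm.mul_apply, Equiv.Perm.mul_apply, Equiv.Perm.one_apply, hb x hxI,
    hb _ (bMap_mem_Icc hxI), hb _ (bMap_mem_Icc (bMap_mem_Icc hxI))]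
  rcases bMap_bMap_bMap_eq_or_eq_add_one (by simpa using hx) with h | h <;> rw [h]
  exact AddCircle.coe_add_period _ _

lemma injective_lift_of_isRotHalf_of_isBElt {a b : Equiv.Perm UnitCircle} (ha : IsRotHalf a)
    (hb : IsBElt b) : Function.Injective (C2C3.lift ha.sq_eq_one hb.cube_eq_one) := by
  have hb_left {x : ℝ} (hx : x ∈ Ioo 0 (1 / 2)) : b x = ((x / 2 + 3 / 4 : ℝ) : UnitCircle) := by
    rw [hb x ⟨hx.1.le, by linarith [hx.2]⟩, bMap, if_pos hx.2.le]
  refine C2C3.lift_injective_of_ping_pong _ _ (X := ((↑) : ℝ → UnitCircle) '' Ioo 0 (1 / 2))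
    (Y := ((↑) : ℝ → UnitCircle) '' Ioo (1 / 2) 1) ⟨_, 1 / 4, by norm_num, rfl⟩
    ⟨_, 3 / 4, by norm_num, rfl⟩ ?_ ?_ ?_ ?_
  · refine Set.disjoint_left.2 ?_
    rintro _ ⟨x, hx, rfl⟩ ⟨y, hy, hxy⟩
    rw [AddCircle.coe_eq_coe_iff_of_mem_Ico (a := 0) ⟨by linarith [hy.1], by linarith [hy.2]⟩
      ⟨hx.1.le, by linarith [hx.2]⟩] at hxy
    linarith [hx.2, hy.1]
  · refine Set.smul_set_subset_iff.2 ?_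
    rintro _ ⟨x, hx, rfl⟩
    refine ⟨x - 1 / 2, ⟨by linarith [hx.1], by linarith [hx.2]⟩, ?_⟩
    rw [Equiv.Perm.smul_def, ha, ← AddCircle.coe_add_period 1 (x - 1 / 2)]
    ring_nf
  · refine Set.smul_set_subset_iff.2 ?_
    rintro _ ⟨x, hx, rfl⟩
    rw [Equiv.Perm.smul_def, hb_left hx]
    exact ⟨_, ⟨by linarith [hx.1], by linarith [hx.2]⟩, rfl⟩
  · refine Set.smul_set_subset_iff.2 ?_
    rintro _ ⟨x, hx, rfl⟩
    rw [Equiv.Perm.smul_def, sq, Equiv.Perm.mul_apply, hb_left hx,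
      hb _ ⟨by linarith [hx.1], by linarith [hx.2]⟩, bMap, if_neg (by linarith [hx.1]),
      if_neg (by linarith [hx.1])]
    exact ⟨_, ⟨by linarith [hx.1], by linarith [hx.2]⟩, rfl⟩

lemma exists_pos_eq_affine_of_mem_Ioo {F : ℝ → ℝ} {p q s c x : ℝ} (hx : x ∈ Ioo p q)
    (hF : ∀ y ∈ Ioo p q, F y = s * y + c) :
    ∃ ε : ℝ, 0 < ε ∧ ∀ y, |y - x| < ε → F y = F x + s * (y - x) := by
  refine ⟨min (x - p) (q - x), lt_min (by linarith [hx.1]) (by linarith [hx.2]), fun y hy => ?_⟩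
  obtain ⟨hy₁, hy₂⟩ := abs_lt.1 hy
  have hyI : y ∈ Ioo p q := ⟨by linarith [min_le_left (x - p) (q - x)],
    by linarith [min_le_right (x - p) (q - x)]⟩
  rw [hF y hyI, hF x hx]
  ring

def degreeOneExtension (G : ℝ → ℝ) (x : ℝ) : ℝ := ⌊x⌋ + G (Int.fract x)

section DegreeOneExtension

variable {G : ℝ → ℝ}

lemma degreeOneExtension_add_one (x : ℝ) :
    degreeOneExtension G (x + 1) = degreeOneExtension G x + 1 := by
  simp only [degreeOneExtension, Int.fract_add_one, Int.floor_add_one]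
  push_cast
  ring

lemma degreeOneExtension_of_mem_Ico {x : ℝ} (hx : x ∈ Ico 0 1) :
    degreeOneExtension G x = G x := by
  rw [degreeOneExtension, Int.fract_eq_self.2 hx, Int.floor_eq_zero_iff.2 hx, Int.cast_zero,
    zero_add]

lemma coe_degreeOneExtension (x : ℝ) :
    (degreeOneExtension G x : UnitCircle) = G (Int.fract x) := by
  rw [degreeOneExtension, add_comm]
  exact coe_add_intCast _ _

lemma strictMono_degreeOneExtension (hG : StrictMonoOn G (Ico 0 1))
    (hG₁ : ∀ t ∈ Ico 0 1, G t < G 0 + 1) : StrictMono (degreeOneExtension G) := by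
  intro x y hxy
  have hx : Int.fract x ∈ Ico 0 1 := ⟨Int.fract_nonneg x, Int.fract_lt_one x⟩
  have hy : Int.fract y ∈ Ico 0 1 := ⟨Int.fract_nonneg y, Int.fract_lt_one y⟩
  rcases (Int.floor_le_floor hxy.le).eq_or_lt with h | h
  · have hfract : Int.fract x < Int.fract y := by
      rw [Int.fract, Int.fract, h]
      linarith
    simp only [degreeOneExtension, h]
    linarith [hG hx hy hfract]
  · have hfloor : (⌊x⌋ : ℝ) + 1 ≤ ⌊y⌋ := by exact_mod_cast h
    have hG₀ : G 0 ≤ G (Int.fract y) := hG.monotoneOn ⟨le_rfl, one_pos⟩ hy hy.1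
    simp only [degreeOneExtension]
    linarith [hG₁ _ hx]

end DegreeOneExtension

lemma isThompsonElt_of_isRotHalf {a : Equiv.Perm UnitCircle} (ha : IsRotHalf a) :
    IsThompsonElt a :=
  ⟨(· + 1 / 2), ⟨strictMono_id.add_const _, fun _ => by ring, ∅, by simp, by simp,
    fun _ _ _ => ⟨0, 1, one_pos, fun _ _ => by simp; ring⟩⟩, ha⟩

/-- `bMap` shifted by `1` on `(1/2, 1]`, which makes it increasing on `[0, 1)`. -/
def bMapLift (t : ℝ) : ℝ :=
  if t ≤ 1 / 2 then t / 2 + 3 / 4 else if t ≤ 3 / 4 then 2 * t else t + 3 / 4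

lemma coe_bMapLift (t : ℝ) : (bMapLift t : UnitCircle) = bMap t := by
  have h : bMapLift t = bMap t + (if t ≤ 1 / 2 then 0 else 1 : ℤ) := by
    unfold bMapLift bMap
    split_ifs <;> push_cast <;> ring
  rw [h, coe_add_intCast]

lemma isDyadic_of_mem_bMapLift_breakpoints {x : ℝ} (hx : x ∈ ({0, 1 / 2, 3 / 4} : Finset ℝ)) :
    IsDyadic x ∧ IsDyadic (degreeOneExtension bMapLift x) := by
  simp only [Finset.mem_insert, Finset.mem_singleton] at hx
  rcases hx with rfl | rfl | rfl <;>
    rw [degreeOneExtension_of_mem_Ico (by norm_num)] <;> norm_num [bMapLift]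
  exacts [⟨⟨0, 0, by norm_num⟩, 3, 2, by norm_num⟩, ⟨⟨1, 1, by norm_num⟩, 1, 0, by norm_num⟩,
    ⟨⟨3, 2, by norm_num⟩, 3, 1, by norm_num⟩]

lemma exists_zpow_affine_degreeOneExtension_bMapLift {x : ℝ} (hx : x ∈ Ico 0 1)
    (hxB : x ∉ ({0, 1 / 2, 3 / 4} : Finset ℝ)) :
    ∃ (m : ℤ) (ε : ℝ), 0 < ε ∧ ∀ y, |y - x| < ε →
      degreeOneExtension bMapLift y = degreeOneExtension bMapLift x + 2 ^ m * (y - x) := by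
  simp only [Finset.mem_insert, Finset.mem_singleton, not_or] at hxB
  obtain ⟨hx₀, hx₁, hx₂⟩ := hxB
  have hF {p q : ℝ} (hpq : Ioo p q ⊆ Ico 0 1) {s c : ℝ}
      (h : ∀ y ∈ Ioo p q, bMapLift y = s * y + c) :
      ∀ y ∈ Ioo p q, degreeOneExtension bMapLift y = s * y + c := fun y hy => by
    rw [degreeOneExtension_of_mem_Ico (hpq hy), h y hy]
  rcases lt_or_gt_of_ne hx₁ with hlt | hgt
  · refine ⟨-1, exists_pos_eq_affine_of_mem_Ioo (c := 3 / 4)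
      ⟨lt_of_le_of_ne hx.1 (Ne.symm hx₀), hlt⟩ (hF (Ioo_subset_Ico_self.trans
        (Ico_subset_Ico_right (by norm_num))) fun y hy => ?_)⟩
    rw [bMapLift, if_pos hy.2.le]
    norm_num
    ring
  rcases lt_or_gt_of_ne hx₂ with hlt' | hgt'
  · refine ⟨1, exists_pos_eq_affine_of_mem_Ioo (c := 0) ⟨hgt, hlt'⟩
      (hF (Ioo_subset_Ico_self.trans (Ico_subset_Ico (by norm_num) (by norm_num)))
        fun y hy => ?_)⟩
    rw [bMapLift, if_neg (by linarith [hy.1]), if_pos hy.2.le]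
    norm_num
  · refine ⟨0, exists_pos_eq_affine_of_mem_Ioo (c := 3 / 4) ⟨hgt', hx.2⟩
      (hF (Ioo_subset_Ico_self.trans (Ico_subset_Ico_left (by norm_num))) fun y hy => ?_)⟩
    rw [bMapLift, if_neg (by linarith [hy.1]), if_neg (by linarith [hy.1])]
    norm_num

lemma isThompsonLift_degreeOneExtension_bMapLift :
    IsThompsonLift (degreeOneExtension bMapLift) := by
  refine ⟨strictMono_degreeOneExtension ?_ ?_, degreeOneExtension_add_one, {0, 1 / 2, 3 / 4},
    ?_, fun _ => isDyadic_of_mem_bMapLift_breakpoints,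
    fun _ => exists_zpow_affine_degreeOneExtension_bMapLift⟩
  · intro s hs t ht hst
    unfold bMapLift
    split_ifs <;> linarith [hs.1, ht.2]
  · intro t ht
    unfold bMapLift
    split_ifs <;> norm_num <;> linarith [ht.1, ht.2]
  · intro x hx
    simp only [Finset.coe_insert, Finset.coe_singleton, mem_insert_iff, mem_singleton_iff] at hx
    rcases hx with rfl | rfl | rfl <;> norm_num

lemma isThompsonElt_of_isBElt {b : Equiv.Perm UnitCircle} (hb : IsBElt b) : IsThompsonElt b := by
  refine ⟨_, isThompsonLift_degreeOneExtension_bMapLift, fun x => ?_⟩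
  rw [coe_degreeOneExtension, coe_bMapLift, ← hb _ ⟨Int.fract_nonneg x, (Int.fract_lt_one x).le⟩,
    coe_fract]

/-- There is an injective group homomorphism `φ` from `PSL₂(ℤ)` into Thompson's
group `T` with `φ(A) = a` and `φ(B) = b`; in particular the subgroup of `T`
generated by `a` and `b` is isomorphic to `PSL₂(ℤ)`. -/
theorem psl2_embeds_in_T (a b : Equiv.Perm UnitCircle)
    (ha : IsRotHalf a) (hb : IsBElt b) :
    ∃ φ : PSL(2, ℤ) →* Equiv.Perm UnitCircle,
      Function.Injective φ ∧ φ Aelt = a ∧ φ Belt = b ∧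
      (∀ g : PSL(2, ℤ), φ g ∈ ThompsonT) ∧
      Nonempty (PSL(2, ℤ) ≃* (Subgroup.closure {a, b} : Subgroup (Equiv.Perm UnitCircle))) := by
  set L := C2C3.lift ha.sq_eq_one hb.cube_eq_one
  set φ := L.comp c2c3EquivPSL.symm.toMonoidHom
  have hφ : Function.Injective φ :=
    (injective_lift_of_isRotHalf_of_isBElt ha hb).comp c2c3EquivPSL.symm.injective
  have hrange : φ.range = Subgroup.closure {a, b} := by
    rw [MonoidHom.range_comp, MonoidHom.range_eq_top.2 c2c3EquivPSL.symm.surjective,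
      ← MonoidHom.range_eq_map, C2C3.range_lift]
  have hT : Subgroup.closure {a, b} ≤ ThompsonT := Subgroup.closure_mono <| by
    rintro _ (rfl | rfl)
    exacts [isThompsonElt_of_isRotHalf ha, isThompsonElt_of_isBElt hb]
  refine ⟨φ, hφ, ?_, ?_, fun g => hT (hrange ▸ ⟨g, rfl⟩),
    ⟨(MonoidHom.ofInjective hφ).trans (MulEquiv.subgroupCongr hrange)⟩⟩
  · exact (congrArg L c2c3EquivPSL_symm_Aelt).trans (C2C3.lift_gen₂ _ _)
  · exact (congrArg L c2c3EquivPSL_symm_Belt).trans (C2C3.lift_gen₃ _ _)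
end
end

section
/- The elements g = ABAB and h = AB⁻¹AB⁻¹ of PSL₂(ℤ) freely generate a free group of rank 2; that is, the group homomorphism from the free group on two generators to PSL₂(ℤ) sending the two generators to g and h respectively is injective. -/
/-!
`ABAB` and `AB⁻¹AB⁻¹` lift to the Sanov matrices `[[1,2],[0,1]]` and `[[1,0],[2,1]]` of
`SL₂(ℤ)`, which act on the slope `x / y` of a nonzero vector `(x, y)` as `r ↦ r + 2` and
`1/r ↦ 1/r + 2`. Cutting the slope line into `(1, ∞]`, `(-∞, -1]`, `(-1, 0)` and `[0, 1]`
gives ping-pong sets, so they generate a free subgroup of `SL₂(ℤ)`. Finally, the kernel `{±1}`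
of `SL₂(ℤ) → PSL₂(ℤ)` meets this subgroup trivially: if `w` maps to `-1` then `w²` maps to
`1`, so `w² = 1` and `w = 1` because free groups are torsion-free.
-/

open scoped MatrixGroups

noncomputable section

open Matrix Function

theorem QuotientGroup.injective_mk'_comp_of_pow_eq_one {H G : Type*} [Group H]
    [IsMulTorsionFree H] [Group G] {N : Subgroup G} [N.Normal] {k : ℕ} (hk : k ≠ 0)
    (hN : ∀ n ∈ N, n ^ k = 1) {φ : H →* G} (hφ : Injective φ) :
    Injective ((QuotientGroup.mk' N).comp φ) := by
  refine (injective_iff_map_eq_one _).mpr fun w hw => ?_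
  have hwN : φ w ∈ N := (QuotientGroup.eq_one_iff _).mp hw
  have hwk : φ (w ^ k) = φ 1 := by rw [map_pow, hN _ hwN, map_one]
  exact (pow_eq_one_iff_left hk).mp (hφ hwk)

theorem Matrix.SpecialLinearGroup.pow_card_eq_one_of_mem_center {n R : Type*} [Fintype n]
    [DecidableEq n] [CommRing R] {z : SpecialLinearGroup n R}
    (hz : z ∈ Subgroup.center (SpecialLinearGroup n R)) : z ^ Fintype.card n = 1 := by
  obtain ⟨r, hr, hrz⟩ := SpecialLinearGroup.mem_center_iff.mp hz
  ext : 1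
  rw [SpecialLinearGroup.coe_pow, ← hrz, ← map_pow, hr, map_one, SpecialLinearGroup.coe_one]

namespace Sanov

def upper : SL(2, ℤ) := ⟨!![1, 2; 0, 1], by simp [det_fin_two]⟩

def lower : SL(2, ℤ) := ⟨!![1, 0; 2, 1], by simp [det_fin_two]⟩

def gen : Bool → SL(2, ℤ)
  | true => upper
  | false => lower

lemma upper_smul (v : Fin 2 → ℤ) : upper • v = ![v 0 + 2 * v 1, v 1] := by
  change !![1, 2; 0, 1] *ᵥ v = _
  ext i; fin_cases i <;> simp [mulVec, dotProduct]

lemma upper_inv_smul (v : Fin 2 → ℤ) : upper⁻¹ • v = ![v 0 - 2 * v 1, v 1] := by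
  rw [inv_smul_eq_iff, upper_smul]
  ext i; fin_cases i <;> simp

lemma lower_smul (v : Fin 2 → ℤ) : lower • v = ![v 0, 2 * v 0 + v 1] := by
  change !![1, 0; 2, 1] *ᵥ v = _
  ext i; fin_cases i <;> simp [mulVec, dotProduct]

lemma lower_inv_smul (v : Fin 2 → ℤ) : lower⁻¹ • v = ![v 0, v 1 - 2 * v 0] := by
  rw [inv_smul_eq_iff, lower_smul]
  ext i; fin_cases i <;> simp

/- In terms of the slope `r = v 0 / v 1`: `forwardSet true = (1, ∞]`,
`backwardSet true = (-∞, -1]`, `forwardSet false = [0, 1]`, `backwardSet false = (-1, 0)`. -/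
def forwardSet : Bool → Set (Fin 2 → ℤ)
  | true => {v | v 1 * v 1 < v 0 * v 1 ∨ v 1 = 0}
  | false => {v | v 0 * v 0 ≤ v 0 * v 1}

def backwardSet : Bool → Set (Fin 2 → ℤ)
  | true => {v | v 0 * v 1 ≤ -(v 1 * v 1) ∧ v 1 ≠ 0}
  | false => {v | v 0 * v 1 < -(v 0 * v 0)}

lemma gen_smul_mem_forwardSet {b : Bool} {v : Fin 2 → ℤ} (hv : v ∉ backwardSet b) :
    gen b • v ∈ forwardSet b := by
  cases b
  · simp only [backwardSet, forwardSet, gen, lower_smul, Set.mem_ofPred_eq, not_lt,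
      cons_val_zero, cons_val_one] at hv ⊢
    nlinarith
  · simp only [backwardSet, forwardSet, gen, upper_smul, Set.mem_ofPred_eq, not_and_or, not_le,
      not_not, cons_val_zero, cons_val_one] at hv ⊢
    exact hv.imp (fun h => by nlinarith) id

lemma gen_inv_smul_mem_backwardSet {b : Bool} {v : Fin 2 → ℤ} (hv : v ∉ forwardSet b) :
    (gen b)⁻¹ • v ∈ backwardSet b := by
  cases b
  · simp only [forwardSet, backwardSet, gen, lower_inv_smul, Set.mem_ofPred_eq, not_le,
      cons_val_zero, cons_val_one] at hv ⊢
    nlinarith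
  · simp only [forwardSet, backwardSet, gen, upper_inv_smul, Set.mem_ofPred_eq, not_or, not_lt,
      cons_val_zero, cons_val_one] at hv ⊢
    exact ⟨by nlinarith, hv.2⟩

lemma disjoint_forwardSet_backwardSet (i j : Bool) :
    Disjoint (forwardSet i) (backwardSet j) := by
  rw [Set.disjoint_left]
  cases i <;> cases j <;> simp only [forwardSet, backwardSet, Set.mem_ofPred_eq]
  · intro v hf hb
    nlinarith
  · rintro v hf ⟨hb, hv⟩
    nlinarith [mul_self_pos.2 hv]
  · rintro v (hf | hf) hb
    · nlinarith
    · rw [hf, mul_zero] at hb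
      nlinarith
  · rintro v (hf | hf) ⟨hb, hv⟩
    · nlinarith
    · exact hv hf

lemma disjoint_backwardSet_true_false : Disjoint (backwardSet true) (backwardSet false) := by
  rw [Set.disjoint_left]
  simp only [backwardSet, Set.mem_ofPred_eq]
  rintro v ⟨h1, -⟩ h2
  nlinarith [sq_nonneg (v 0 + v 1)]

lemma forwardSet_true_inter_false_subset_zero : forwardSet true ∩ forwardSet false ⊆ {0} := by
  simp only [forwardSet, Set.subset_def, Set.mem_inter_iff, Set.mem_ofPred_eq,
    Set.mem_singleton_iff]
  rintro v ⟨h1 | h1, h2⟩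
  · nlinarith [sq_nonneg (v 0 - v 1)]
  · have h0 : v 0 = 0 := by nlinarith
    ext i; fin_cases i <;> simp [h0, h1]

/- `RayVector ℤ (Fin 2 → ℤ)` is the type of nonzero vectors of `ℤ²`. -/
theorem injective_lift_gen : Injective (FreeGroup.lift gen) := by
  let nonzero (S : Bool → Set (Fin 2 → ℤ)) (b : Bool) : Set (RayVector ℤ (Fin 2 → ℤ)) :=
    Subtype.val ⁻¹' S b
  refine FreeGroup.injective_lift_of_ping_pong gen (nonzero forwardSet) (nonzero backwardSet)
    ?_ ?_ ?_ ?_ ?_ ?_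
  · rintro (_ | _)
    · exact ⟨⟨![0, 1], by simp⟩, show ![0, 1] ∈ forwardSet false by simp [forwardSet]⟩
    · exact ⟨⟨![1, 0], by simp⟩, show ![1, 0] ∈ forwardSet true by simp [forwardSet]⟩
  · have hf : Disjoint (nonzero forwardSet false) (nonzero forwardSet true) :=
      Set.disjoint_left.mpr fun v h1 h2 => v.2 (forwardSet_true_inter_false_subset_zero ⟨h2, h1⟩)
    simpa [pairwise_disjoint_on, Bool.forall_bool] using hf
  · have hb : Disjoint (nonzero backwardSet false) (nonzero backwardSet true) :=
      disjoint_backwardSet_true_false.symm.preimage _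
    simpa [pairwise_disjoint_on, Bool.forall_bool] using hb
  · exact fun i j => (disjoint_forwardSet_backwardSet i j).preimage _
  · exact fun b => Set.smul_set_subset_iff.mpr fun _ => gen_smul_mem_forwardSet
  · exact fun b => Set.smul_set_subset_iff.mpr fun _ => gen_inv_smul_mem_backwardSet

end Sanov

lemma Aelt_mul_Belt_mul_Aelt_mul_Belt :
    Aelt * Belt * Aelt * Belt = (QuotientGroup.mk Sanov.upper : PSL(2, ℤ)) := by
  have h : (⟨!![0, -1; 1, 0], by simp⟩ * ⟨!![0, -1; 1, 1], by simp⟩ * ⟨!![0, -1; 1, 0], by simp⟩ *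
      ⟨!![0, -1; 1, 1], by simp⟩ : SL(2, ℤ)) = Sanov.upper := by
    ext i j; fin_cases i <;> fin_cases j <;> rfl
  exact congrArg QuotientGroup.mk h

lemma Aelt_mul_Belt_inv_mul_Aelt_mul_Belt_inv :
    Aelt * Belt⁻¹ * Aelt * Belt⁻¹ = (QuotientGroup.mk Sanov.lower : PSL(2, ℤ)) := by
  have h : (⟨!![0, -1; 1, 0], by simp⟩ * (⟨!![0, -1; 1, 1], by simp⟩)⁻¹ *
      ⟨!![0, -1; 1, 0], by simp⟩ * (⟨!![0, -1; 1, 1], by simp⟩)⁻¹ : SL(2, ℤ)) = Sanov.lower := by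
    ext i j; fin_cases i <;> fin_cases j <;> rfl
  exact congrArg QuotientGroup.mk h

/-- The elements `g = ABAB` and `h = AB⁻¹AB⁻¹` of `PSL₂(ℤ)` freely generate a free
group of rank 2: the homomorphism from the free group on two generators sending the
generators to `g` and `h` is injective. -/
theorem abab_free : Function.Injective
    (FreeGroup.lift (fun x : Bool =>
      if x then Aelt * Belt * Aelt * Belt else Aelt * Belt⁻¹ * Aelt * Belt⁻¹) :
      FreeGroup Bool →* PSL(2, ℤ)) := by
  have hlift : FreeGroup.lift (fun x : Bool =>
      if x then Aelt * Belt * Aelt * Belt else Aelt * Belt⁻¹ * Aelt * Belt⁻¹) =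
      (QuotientGroup.mk' _).comp (FreeGroup.lift Sanov.gen) := by
    refine FreeGroup.ext_hom _ _ fun b => ?_
    cases b
    · simpa [Sanov.gen] using Aelt_mul_Belt_inv_mul_Aelt_mul_Belt_inv
    · simpa [Sanov.gen] using Aelt_mul_Belt_mul_Aelt_mul_Belt
  rw [hlift]
  exact QuotientGroup.injective_mk'_comp_of_pow_eq_one Fintype.card_ne_zero
    (fun _ => SpecialLinearGroup.pow_card_eq_one_of_mem_center) Sanov.injective_lift_gen

end
end
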